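/- Let q be a real number with q > 0 and q ≠ 1, let k ≥ 1 and x ≥ 1 be natural numbers, and let r_1, …, r_k ≥ 1 be natural numbers. Then the q-multinomial coefficient satisfies the recurrence C_q(x; r_1,…,r_k) = q^{m_1} · C_q(x−1; r_1,…,r_k) + Σ_{j=1}^{k} q^{m_{j+1}} · C_q(x−1; r_1,…,r_{j−1}, r_j−1, r_{j+1},…,r_k), where m_j = r_j + ⋯ + r_k and m_{k+1} = 0. -/

import Mathlib

noncomputable def qNum (q : ℝ) (m : ℤ) : ℝ := (1 - q ^ m) / (1 - q)

noncomputable def qFactorial (q : ℝ) (n : ℕ) : ℝ :=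
  ∏ i ∈ Finset.range n, qNum q ((i : ℤ) + 1)

noncomputable def qFacOrd (q : ℝ) (x : ℤ) (r : ℕ) : ℝ :=
  ∏ i ∈ Finset.range r, qNum q (x - (i : ℤ))

noncomputable def qMultinomial (q : ℝ) (x : ℤ) {k : ℕ} (r : Fin k → ℕ) : ℝ :=
  qFacOrd q x (∑ j, r j) / ∏ j, qFactorial q (r j)

/-!
Put everything over the common denominator `∏ j, [r_j]_q!`. Removing one from `r_j` divides that
denominator by `[r_j]_q`, so the `j`-th correction term becomes `q^{m_{j+1}} [r_j]_q [x-1]_{s-1}`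
with `s = r_1 + ⋯ + r_k`, and the weights telescope to `∑ j, q^{m_{j+1}} [r_j]_q = [s]_q`.
What remains is the q-Pascal rule `[x]_s = q^s [x-1]_s + [s]_q [x-1]_{s-1}` for q-falling
factorials, which after cancelling `[x-1]_{s-1}` is `[x]_q = [s]_q + q^s [x-s]_q`.
-/

open Finset

lemma qNum_add {q : ℝ} (hq : q ≠ 0) (a b : ℤ) :
    qNum q (a + b) = qNum q a + q ^ a * qNum q b := by
  rw [qNum, qNum, qNum, zpow_add₀ hq]
  ring

lemma qNum_natCast_ne_zero {q : ℝ} (hq : 0 < q) (hq1 : q ≠ 1) {n : ℕ} (hn : n ≠ 0) :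
    qNum q n ≠ 0 := by
  have hqn : q ^ n ≠ 1 := by
    rcases hq1.lt_or_gt with h | h
    · exact (pow_lt_one₀ hq.le h hn).ne
    · exact (one_lt_pow₀ h hn).ne'
  rw [qNum, zpow_natCast]
  exact div_ne_zero (sub_ne_zero.mpr hqn.symm) (sub_ne_zero.mpr hq1.symm)

lemma sum_filter_succ_lt {M : Type*} [AddCommMonoid M] {k : ℕ} (f : Fin (k + 1) → M)
    (j : Fin k) :
    ∑ i ∈ univ.filter (fun i => j.succ < i), f i =
      ∑ i ∈ univ.filter (fun i => j < i), f i.succ := by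
  simp only [sum_filter, Fin.sum_univ_succ, Fin.succ_lt_succ_iff, Fin.not_lt_zero,
    if_false, zero_add]

lemma sum_filter_zero_lt {M : Type*} [AddCommMonoid M] {k : ℕ} (f : Fin (k + 1) → M) :
    ∑ i ∈ univ.filter (fun i => 0 < i), f i = ∑ i : Fin k, f i.succ := by
  simp [sum_filter, Fin.sum_univ_succ, Fin.succ_pos]

lemma qNum_natCast_sum {q : ℝ} (hq : q ≠ 0) {k : ℕ} (r : Fin k → ℕ) :
    qNum q (∑ i, r i : ℕ) =
      ∑ j, q ^ (∑ i ∈ univ.filter (fun i => j < i), r i) * qNum q (r j) := by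
  induction k with
  | zero => simp [qNum]
  | succ k ih =>
    rw [Fin.sum_univ_succ, Fin.sum_univ_succ, sum_filter_zero_lt, add_comm, Nat.cast_add,
      qNum_add hq, zpow_natCast, ih, add_comm]
    simp only [sum_filter_succ_lt]

lemma qFacOrd_succ (q : ℝ) (x : ℤ) (n : ℕ) :
    qFacOrd q x (n + 1) = qNum q x * qFacOrd q (x - 1) n := by
  simp only [qFacOrd, prod_range_succ', Nat.cast_zero, sub_zero, Nat.cast_succ, sub_add_eq_sub_sub,
    sub_right_comm _ _ (1 : ℤ), mul_comm]

lemma qFacOrd_succ' (q : ℝ) (x : ℤ) (n : ℕ) :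
    qFacOrd q x (n + 1) = qFacOrd q x n * qNum q (x - n) :=
  prod_range_succ _ _

-- At `s = 0` the truncated `s - 1` is harmless: the term carries the factor `[0]_q = 0`.
lemma qFacOrd_pascal {q : ℝ} (hq : q ≠ 0) (x : ℤ) (s : ℕ) :
    qFacOrd q x s = q ^ s * qFacOrd q (x - 1) s + qNum q s * qFacOrd q (x - 1) (s - 1) := by
  cases s with
  | zero => simp [qFacOrd, qNum]
  | succ n =>
    have hsplit : qNum q x = qNum q (n + 1 : ℕ) + q ^ (n + 1) * qNum q (x - 1 - n) := by
      rw [← zpow_natCast, ← qNum_add hq]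
      congr 1
      push_cast
      ring
    rw [qFacOrd_succ, qFacOrd_succ', Nat.add_sub_cancel, hsplit]
    ring

lemma qFactorial_succ (q : ℝ) (n : ℕ) :
    qFactorial q (n + 1) = qFactorial q n * qNum q (n + 1 : ℕ) := by
  rw [qFactorial, prod_range_succ]
  push_cast
  rfl

lemma qFactorial_ne_zero {q : ℝ} (hq : 0 < q) (hq1 : q ≠ 1) (n : ℕ) : qFactorial q n ≠ 0 :=
  prod_ne_zero_iff.mpr fun i _ => by
    exact_mod_cast qNum_natCast_ne_zero hq hq1 (Nat.succ_ne_zero i)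

section update

variable {k : ℕ} (r : Fin k → ℕ) {j : Fin k}

lemma sum_update_pred (hj : 1 ≤ r j) : ∑ i, Function.update r j (r j - 1) i = ∑ i, r i - 1 := by
  have h := sum_update_of_mem (mem_univ j) r (r j)
  rw [Function.update_eq_self] at h
  rw [sum_update_of_mem (mem_univ j), h]
  omega

lemma prod_qFactorial_update_pred (q : ℝ) (hj : 1 ≤ r j) :
    qNum q (r j) * ∏ i, qFactorial q (Function.update r j (r j - 1) i) =
      ∏ i, qFactorial q (r i) := by
  have h := prod_update_of_mem (mem_univ j) (fun i => qFactorial q (r i)) (qFactorial q (r j))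
  have h' := prod_update_of_mem (mem_univ j) (fun i => qFactorial q (r i)) (qFactorial q (r j - 1))
  simp only [Function.update_eq_self] at h
  simp only [← Function.apply_update (fun _ => qFactorial q)] at h'
  rw [h', h]
  obtain ⟨m, hm⟩ := Nat.exists_eq_add_of_le' hj
  rw [hm, Nat.add_sub_cancel, qFactorial_succ]
  ring

lemma qMultinomial_update_pred {q : ℝ} (hq : 0 < q) (hq1 : q ≠ 1) (x : ℤ) (hj : 1 ≤ r j) :
    qMultinomial q x (Function.update r j (r j - 1)) =
      qNum q (r j) * qFacOrd q x (∑ i, r i - 1) / ∏ i, qFactorial q (r i) := by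
  rw [qMultinomial, sum_update_pred r hj, ← prod_qFactorial_update_pred r q hj,
    mul_div_mul_left _ _ (qNum_natCast_ne_zero hq hq1 (by omega))]

end update

theorem qMultinomial_recurrence_inv_general (q : ℝ) (hq : 0 < q) (hq1 : q ≠ 1)
    (k x : ℕ) (r : Fin k → ℕ) (hr : ∀ j, 1 ≤ r j) :
    qMultinomial q (x : ℤ) r =
      q ^ (∑ i, r i) * qMultinomial q ((x : ℤ) - 1) r +
      ∑ j : Fin k,
        q ^ (∑ i ∈ Finset.univ.filter (fun i => j < i), r i) *
          qMultinomial q ((x : ℤ) - 1) (Function.update r j (r j - 1)) := by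
  simp only [qMultinomial_update_pred r hq hq1 _ (hr _), mul_div_assoc', ← sum_div,
    ← mul_assoc, ← sum_mul, ← qNum_natCast_sum hq.ne']
  rw [qMultinomial, qMultinomial, qFacOrd_pascal hq.ne', add_div, mul_div_assoc]

/-- Inverted-parameter q-multinomial recurrence:
    C_q(x; r) = q^(m_1) C_q(x−1; r) + Σ_j q^(m_{j+1}) C_q(x−1; r with r_j−1),
    m_j = r_j + ⋯ + r_k, m_{k+1} = 0. -/
theorem qMultinomial_recurrence_inv (q : ℝ) (hq : 0 < q) (hq1 : q ≠ 1)
    (k x : ℕ) (hk : 1 ≤ k) (hx : 1 ≤ x) (r : Fin k → ℕ) (hr : ∀ j, 1 ≤ r j) :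
    qMultinomial q (x : ℤ) r =
      q ^ (∑ i, r i) * qMultinomial q ((x : ℤ) - 1) r +
      ∑ j : Fin k,
        q ^ (∑ i ∈ Finset.univ.filter (fun i => j < i), r i) *
          qMultinomial q ((x : ℤ) - 1) (Function.update r j (r j - 1)) :=
  qMultinomial_recurrence_inv_general q hq hq1 k x r hr
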